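/- arXiv:0712.0233 — 2 statements merged into one kernel-verified Lean document; each statement's English description precedes it below -/
import Mathlib

section
/- Let p be a prime, let j ∈ ZMod p with j ≠ 0 and j ≠ 1, let m ≥ 2 be a natural number dividing p − 1, and let a, b, c ∈ ZMod p be such that (1 − j)·a^m + j·b^m = c^m, where a^m, b^m and c^m are nonzero and pairwise distinct in ZMod p. Let α, γ ∈ ZMod p with α ≠ 0. Define g : ZMod p → ZMod p by g(k) = γ + (b/c)^m · (j·k − γ) if (j·k − γ)/α is a nonzero m-th power in ZMod p, and g(k) = j·k otherwise. Then L(i, k) = g(k − i) + i is a diagonally cyclic latin square of order p; equivalently, both g and the map k ↦ g(k) − k are bijections of ZMod p. -/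
/-- `L` is a latin square of order `n`: every row and every column is a bijection. -/
def IsLatinSquare {n : ℕ} (L : ZMod n → ZMod n → ZMod n) : Prop :=
  (∀ i, Function.Bijective (fun j => L i j)) ∧
  (∀ j, Function.Bijective (fun i => L i j))

/-- `L` is diagonally cyclic. -/
def IsDiagonallyCyclic {n : ℕ} (L : ZMod n → ZMod n → ZMod n) : Prop :=
  ∀ i j, L (i + 1) (j + 1) = L i j + 1

/-- `x` is a nonzero `m`-th power in `ZMod p`. -/
def IsNonzeroMthPower {p : ℕ} (m : ℕ) (x : ZMod p) : Prop :=
  x ≠ 0 ∧ ∃ y : ZMod p, x = y ^ m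

theorem stmt2 (p : ℕ) [hp : Fact p.Prime] (j : ZMod p) (hj0 : j ≠ 0) (hj1 : j ≠ 1)
    (m : ℕ) (hm2 : 2 ≤ m) (hmd : m ∣ p - 1) (a b c : ZMod p)
    (heq : (1 - j) * a ^ m + j * b ^ m = c ^ m)
    (ha : a ^ m ≠ 0) (hb : b ^ m ≠ 0) (hc : c ^ m ≠ 0)
    (hab : a ^ m ≠ b ^ m) (hac : a ^ m ≠ c ^ m) (hbc : b ^ m ≠ c ^ m)
    (α γ : ZMod p) (hα : α ≠ 0)
    (g : ZMod p → ZMod p)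
    (hg1 : ∀ k : ZMod p, IsNonzeroMthPower m ((j * k - γ) / α) →
      g k = γ + (b / c) ^ m * (j * k - γ))
    (hg2 : ∀ k : ZMod p, ¬ IsNonzeroMthPower m ((j * k - γ) / α) → g k = j * k) :
    (IsLatinSquare (fun i k => g (k - i) + i) ∧
      IsDiagonallyCyclic (fun i k => g (k - i) + i)) ∧
    (Function.Bijective g ∧ Function.Bijective (fun k => g k - k)) := by
  have ha0 : a ≠ 0 := fun h => ha (by simp [h, zero_pow (by omega : m ≠ 0)])
  have hb0 : b ≠ 0 := fun h => hb (by simp [h, zero_pow (by omega : m ≠ 0)])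
  have hc0 : c ≠ 0 := fun h => hc (by simp [h, zero_pow (by omega : m ≠ 0)])
  have hj1' : j - 1 ≠ 0 := sub_ne_zero.mpr hj1
  have key : (b / c) ^ m * j - 1 = (j - 1) * (a / c) ^ m := by
    rw [div_pow, div_pow]
    field_simp
    linear_combination heq
  have hQ0 : (b / c) ^ m ≠ 0 := pow_ne_zero _ (div_ne_zero hb0 hc0)
  have hA0 : (a / c) ≠ 0 := div_ne_zero ha0 hc0
  -- multiplying a nonzero m-th power by z^m (z ≠ 0) preserves the property
  have hmul : ∀ (z x : ZMod p), z ≠ 0 → IsNonzeroMthPower m x →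
      IsNonzeroMthPower m (z ^ m * x) := by
    rintro z x hz ⟨hx0, y, rfl⟩
    exact ⟨mul_ne_zero (pow_ne_zero _ hz) hx0, z * y, by rw [mul_pow]⟩
  -- injectivity of g
  have hginj : Function.Injective g := by
    intro k k' hkk
    by_cases h1 : IsNonzeroMthPower m ((j * k - γ) / α) <;>
      by_cases h2 : IsNonzeroMthPower m ((j * k' - γ) / α)
    · rw [hg1 k h1, hg1 k' h2] at hkk
      have h3 : (b / c) ^ m * j * (k - k') = 0 := by linear_combination hkk
      have h4 : k - k' = 0 := by
        rcases mul_eq_zero.mp h3 with h | h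
        · exact absurd h (mul_ne_zero hQ0 hj0)
        · exact h
      exact sub_eq_zero.mp h4
    · rw [hg1 k h1, hg2 k' h2] at hkk
      exfalso
      have h3 : j * k' - γ = (b / c) ^ m * (j * k - γ) := by linear_combination -hkk
      have h4 : (j * k' - γ) / α = (b / c) ^ m * ((j * k - γ) / α) := by
        rw [h3, mul_div_assoc]
      exact h2 (h4 ▸ hmul _ _ (div_ne_zero hb0 hc0) h1)
    · rw [hg2 k h1, hg1 k' h2] at hkk
      exfalso
      have h3 : j * k - γ = (b / c) ^ m * (j * k' - γ) := by linear_combination hkk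
      have h4 : (j * k - γ) / α = (b / c) ^ m * ((j * k' - γ) / α) := by
        rw [h3, mul_div_assoc]
      exact h1 (h4 ▸ hmul _ _ (div_ne_zero hb0 hc0) h2)
    · rw [hg2 k h1, hg2 k' h2] at hkk
      exact mul_left_cancel₀ hj0 hkk
  -- injectivity of k ↦ g k - k
  have hfinj : Function.Injective (fun k => g k - k) := by
    intro k k' hkk
    simp only at hkk
    by_cases h1 : IsNonzeroMthPower m ((j * k - γ) / α) <;>
      by_cases h2 : IsNonzeroMthPower m ((j * k' - γ) / α)
    · rw [hg1 k h1, hg1 k' h2] at hkk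
      have h3 : ((b / c) ^ m * j - 1) * (k - k') = 0 := by linear_combination hkk
      have hQj : (b / c) ^ m * j - 1 ≠ 0 := by
        rw [key]; exact mul_ne_zero hj1' (pow_ne_zero _ hA0)
      have h4 : k - k' = 0 := by
        rcases mul_eq_zero.mp h3 with h | h
        · exact absurd h hQj
        · exact h
      exact sub_eq_zero.mp h4
    · rw [hg1 k h1, hg2 k' h2] at hkk
      exfalso
      have h3 : (j - 1) * (j * k' - γ) = (j - 1) * ((a / c) ^ m * (j * k - γ)) := by
        linear_combination (-j) * hkk + (j * k - γ) * key
      have h4 : j * k' - γ = (a / c) ^ m * (j * k - γ) := mul_left_cancel₀ hj1' h3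
      have h5 : (j * k' - γ) / α = (a / c) ^ m * ((j * k - γ) / α) := by
        rw [h4, mul_div_assoc]
      exact h2 (h5 ▸ hmul _ _ hA0 h1)
    · rw [hg2 k h1, hg1 k' h2] at hkk
      exfalso
      have h3 : (j - 1) * (j * k - γ) = (j - 1) * ((a / c) ^ m * (j * k' - γ)) := by
        linear_combination j * hkk + (j * k' - γ) * key
      have h4 : j * k - γ = (a / c) ^ m * (j * k' - γ) := mul_left_cancel₀ hj1' h3
      have h5 : (j * k - γ) / α = (a / c) ^ m * ((j * k' - γ) / α) := by
        rw [h4, mul_div_assoc]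
      exact h1 (h5 ▸ hmul _ _ hA0 h2)
    · rw [hg2 k h1, hg2 k' h2] at hkk
      have h3 : (j - 1) * (k - k') = 0 := by linear_combination hkk
      have h4 : k - k' = 0 := by
        rcases mul_eq_zero.mp h3 with h | h
        · exact absurd h hj1'
        · exact h
      exact sub_eq_zero.mp h4
  have hgbij : Function.Bijective g := Finite.injective_iff_bijective.mp hginj
  have hfbij : Function.Bijective (fun k => g k - k) :=
    Finite.injective_iff_bijective.mp hfinj
  refine ⟨⟨⟨?_, ?_⟩, ?_⟩, hgbij, hfbij⟩
  · intro i
    have h1 : (fun k : ZMod p => g (k - i) + i) =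
        (fun x => x + i) ∘ g ∘ (fun k => k - i) := rfl
    rw [h1]
    exact ((Equiv.addRight i).bijective.comp hgbij).comp (Equiv.subRight i).bijective
  · intro k
    have h1 : (fun i : ZMod p => g (k - i) + i) =
        (fun x => x + k) ∘ (fun x => g x - x) ∘ (fun i => k - i) := by
      funext i
      show g (k - i) + i = g (k - i) - (k - i) + k
      ring
    rw [h1]
    exact ((Equiv.addRight k).bijective.comp hfbij).comp (Equiv.subLeft k).bijective
  · intro i k
    show g (k + 1 - (i + 1)) + (i + 1) = g (k - i) + i + 1
    rw [add_sub_add_right_eq_sub]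
    ring
end

section
/- Let p be a prime and let m ≥ 2 be a natural number dividing p − 1. Let c, e, j ∈ ZMod p satisfy c ∉ {0, 1}, j ∉ {0, 1}, and e ∉ {0, j, c, c + j − 1, j·c}. Suppose there exists x ∈ ZMod p such that: x is a nonzero m-th power; (1 − j·x)/(1 − j) is a nonzero m-th power; (e − x·j·c)/(e − j·c) is not a nonzero m-th power; and (x·j·(1 − c) + e − j)/(e − j·c) is not a nonzero m-th power. Then there exists a diagonally cyclic latin square L : ZMod p → ZMod p → ZMod p with L 0 0 = 0, L 0 1 = j, and L 0 c = e. -/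
open Function

section Orthomorphism

variable {G : Type*} [AddCommGroup G]

def IsOrthomorphism (σ : G → G) : Prop :=
  Bijective σ ∧ Bijective fun t => σ t - t

theorem IsOrthomorphism.isLatinSquare {n : ℕ} {σ : ZMod n → ZMod n} (hσ : IsOrthomorphism σ) :
    IsLatinSquare fun i t => σ (t - i) + i := by
  refine ⟨fun i => (Equiv.addRight i).bijective.comp (hσ.1.comp (Equiv.subRight i).bijective),
    fun t => ?_⟩
  have hcol : (fun i => σ (t - i) + i) = (· + t) ∘ (fun u => σ u - u) ∘ (t - ·) := by
    funext i
    simp only [comp_apply]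
    abel
  rw [hcol]
  exact (Equiv.addRight t).bijective.comp (hσ.2.comp (Equiv.subLeft t).bijective)

theorem isDiagonallyCyclic_translate {n : ℕ} (σ : ZMod n → ZMod n) :
    IsDiagonallyCyclic fun i t => σ (t - i) + i := by
  intro i t
  simp only [add_sub_add_right_eq_sub, add_assoc]

end Orthomorphism

section AffineConjugation

variable {F : Type*} [Field F] {k : F}

theorem bijective_affineConj {φ : F → F} (hφ : Bijective φ) (hk : k ≠ 0) (g : F) :
    Bijective fun t => (φ (k * t + g) - φ g) / k := by
  have hdecomp : (fun t => (φ (k * t + g) - φ g) / k) =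
      (· * k⁻¹) ∘ (· - φ g) ∘ φ ∘ (· + g) ∘ (k * ·) := by
    funext t
    simp only [comp_apply, div_eq_mul_inv]
  rw [hdecomp]
  exact (mulRight_bijective₀ _ (inv_ne_zero hk)).comp <| (Equiv.subRight _).bijective.comp <|
    hφ.comp <| (Equiv.addRight g).bijective.comp (mulLeft_bijective₀ k hk)

theorem IsOrthomorphism.affineConj {θ : F → F} (hθ : IsOrthomorphism θ) (hk : k ≠ 0) (g : F) :
    IsOrthomorphism fun t => (θ (k * t + g) - θ g) / k := by
  refine ⟨bijective_affineConj hθ.1 hk g, ?_⟩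
  have hsub : (fun t => (θ (k * t + g) - θ g) / k - t) =
      fun t => ((θ (k * t + g) - (k * t + g)) - (θ g - g)) / k := by
    funext t
    field_simp
    ring
  rw [hsub]
  exact bijective_affineConj hθ.2 hk g

end AffineConjugation

section PiecewiseMul

variable {F : Type*} [Field F] (P : F → Prop)

open Classical in
noncomputable def piecewiseMul (a b t : F) : F :=
  if P t then a * t else b * t

variable {P}

theorem piecewiseMul_of_pos {a b t : F} (ht : P t) : piecewiseMul P a b t = a * t := by
  simp [piecewiseMul, ht]

theorem piecewiseMul_of_neg {a b t : F} (ht : ¬ P t) : piecewiseMul P a b t = b * t := by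
  simp [piecewiseMul, ht]

theorem piecewiseMul_sub_self (a b t : F) :
    piecewiseMul P a b t - t = piecewiseMul P (a - 1) (b - 1) t := by
  by_cases ht : P t
  · rw [piecewiseMul_of_pos ht, piecewiseMul_of_pos ht]; ring
  · rw [piecewiseMul_of_neg ht, piecewiseMul_of_neg ht]; ring

theorem piecewiseMul_injective {a b : F} (hab : a / b ≠ 0) (hP : ∀ t, P (a / b * t) ↔ P t) :
    Injective (piecewiseMul P a b) := by
  obtain ⟨ha, hb⟩ := div_ne_zero_iff.mp hab
  have hcross : ∀ s t, P s → ¬ P t → a * s ≠ b * t := by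
    intro s t hs ht hst
    have hts : t = a / b * s := by field_simp; linear_combination -hst
    exact ht (hts ▸ (hP s).mpr hs)
  intro s t hst
  by_cases hs : P s <;> by_cases ht : P t <;>
    simp only [piecewiseMul_of_pos, piecewiseMul_of_neg, hs, ht, not_false_eq_true] at hst
  · exact mul_left_cancel₀ ha hst
  · exact absurd hst (hcross s t hs ht)
  · exact absurd hst.symm (hcross t s ht hs)
  · exact mul_left_cancel₀ hb hst

end PiecewiseMul

section Cyclotomic

variable {p m : ℕ} [Fact p.Prime]

theorem IsNonzeroMthPower.one : IsNonzeroMthPower m (1 : ZMod p) :=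
  ⟨one_ne_zero, 1, (one_pow m).symm⟩

theorem IsNonzeroMthPower.mul_left_iff {a : ZMod p} (ha : IsNonzeroMthPower m a) (b : ZMod p) :
    IsNonzeroMthPower m (a * b) ↔ IsNonzeroMthPower m b := by
  obtain ⟨ha0, y, rfl⟩ := ha
  constructor
  · rintro ⟨hab0, z, hz⟩
    exact ⟨right_ne_zero_of_mul hab0, y⁻¹ * z, by rw [mul_pow, inv_pow, ← hz, inv_mul_cancel_left₀ ha0]⟩
  · rintro ⟨hb0, z, rfl⟩
    exact ⟨mul_ne_zero ha0 hb0, y * z, (mul_pow y z m).symm⟩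

theorem isOrthomorphism_piecewiseMul {a b : ZMod p} (hab : IsNonzeroMthPower m (a / b))
    (hab' : IsNonzeroMthPower m ((a - 1) / (b - 1))) :
    IsOrthomorphism (piecewiseMul (IsNonzeroMthPower m) a b) := by
  refine ⟨Finite.injective_iff_bijective.mp (piecewiseMul_injective hab.1 hab.mul_left_iff), ?_⟩
  simp only [piecewiseMul_sub_self]
  exact Finite.injective_iff_bijective.mp (piecewiseMul_injective hab'.1 hab'.mul_left_iff)

end Cyclotomic

theorem stmt3_general (p : ℕ) [hp : Fact p.Prime] (m : ℕ)
    (c e j : ZMod p) (hj0 : j ≠ 0)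
    (hejc : e ≠ j * c)
    (hx : ∃ x : ZMod p, IsNonzeroMthPower m x ∧
      IsNonzeroMthPower m ((1 - j * x) / (1 - j)) ∧
      ¬ IsNonzeroMthPower m ((e - x * j * c) / (e - j * c)) ∧
      ¬ IsNonzeroMthPower m ((x * j * (1 - c) + e - j) / (e - j * c))) :
    ∃ L : ZMod p → ZMod p → ZMod p, IsLatinSquare L ∧ IsDiagonallyCyclic L ∧
      L 0 0 = 0 ∧ L 0 1 = j ∧ L 0 c = e := by
  obtain ⟨x, hxP, hdiffP, hgP, hkgP⟩ := hx
  have hejc' : e - j * c ≠ 0 := sub_ne_zero.mpr hejc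
  have hx1 : x - 1 ≠ 0 := by
    rintro hx1
    rw [sub_eq_zero.mp hx1, one_mul, div_self hejc'] at hgP
    exact hgP IsNonzeroMthPower.one
  set θ := piecewiseMul (IsNonzeroMthPower m) (j * x) j
  have hθ : IsOrthomorphism θ := by
    refine isOrthomorphism_piecewiseMul (by rw [mul_div_cancel_left₀ x hj0]; exact hxP) ?_
    rw [← neg_div_neg_eq, neg_sub, neg_sub]
    exact hdiffP
  set k := j * (x - 1) / (e - j * c)
  set g := (e - x * j * c) / (e - j * c)
  have hk : k ≠ 0 := div_ne_zero (mul_ne_zero hj0 hx1) hejc'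
  have hkg : k + g = (x * j * (1 - c) + e - j) / (e - j * c) := by
    simp only [k, g]
    field_simp
    ring
  have hkcg : k * c + g = 1 := by
    simp only [k, g]
    field_simp
    ring
  set σ := fun t => (θ (k * t + g) - θ g) / k
  refine ⟨fun i t => σ (t - i) + i, (hθ.affineConj hk g).isLatinSquare,
    isDiagonallyCyclic_translate σ, ?_, ?_, ?_⟩ <;>
    simp only [σ, θ, sub_zero, add_zero, mul_zero, zero_add, sub_self, zero_div, mul_one]
  · rw [piecewiseMul_of_neg (hkg ▸ hkgP), piecewiseMul_of_neg hgP]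
    field_simp
    ring
  · rw [hkcg, piecewiseMul_of_pos IsNonzeroMthPower.one, piecewiseMul_of_neg hgP]
    simp only [k, g]
    field_simp
    ring

theorem stmt3 (p : ℕ) [hp : Fact p.Prime] (m : ℕ) (hm2 : 2 ≤ m) (hmd : m ∣ p - 1)
    (c e j : ZMod p) (hc0 : c ≠ 0) (hc1 : c ≠ 1) (hj0 : j ≠ 0) (hj1 : j ≠ 1)
    (he0 : e ≠ 0) (hej : e ≠ j) (hec : e ≠ c) (hecj : e ≠ c + j - 1)
    (hejc : e ≠ j * c)
    (hx : ∃ x : ZMod p, IsNonzeroMthPower m x ∧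
      IsNonzeroMthPower m ((1 - j * x) / (1 - j)) ∧
      ¬ IsNonzeroMthPower m ((e - x * j * c) / (e - j * c)) ∧
      ¬ IsNonzeroMthPower m ((x * j * (1 - c) + e - j) / (e - j * c))) :
    ∃ L : ZMod p → ZMod p → ZMod p, IsLatinSquare L ∧ IsDiagonallyCyclic L ∧
      L 0 0 = 0 ∧ L 0 1 = j ∧ L 0 c = e :=
  stmt3_general p (hp := hp) m c e j hj0 hejc hx
end
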